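/- Let λ be the hyperbolic area measure on the upper half-plane and U = {(x,y) : -1/2 < x < 1/2, y > 2|x|}. Then for x, x' ∈ ℝ, λ(U∩(U+(x'-x))) restricted to any vertical truncation at y above 0 converges, and λ((U+x) ∩ (U+x')) = log(1/min(|x-x'|, 1)). -/

import Mathlib

open Real MeasureTheory Filter

/-- The hyperbolic area measure `dx dy / y²`. -/
noncomputable def hypMeasure : Measure (ℝ × ℝ) :=
  volume.withDensity (fun p => ENNReal.ofReal (1 / p.2 ^ 2))

/-- The infinite cone region `U`. -/
def coneU : Set (ℝ × ℝ) :=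
  {p | -(1/2) < p.1 ∧ p.1 < 1/2 ∧ 2 * |p.1| < p.2}

/-- Horizontal translate of a planar set. -/
def htrans (A : Set (ℝ × ℝ)) (t : ℝ) : Set (ℝ × ℝ) := {p | (p.1 - t, p.2) ∈ A}

/-! At height `y` the slice of `(U + x) ∩ (U + x')` is an open interval of length
`min y 1 - d`, `d = |x - x'|` (empty when this is `≤ 0`), so by Fubini its hyperbolic area is
`∫ (min y 1 - d)⁺ / y² dy`. For `d ≤ 1` this is `∫_d^1 (1/y - d/y²) dy + ∫_1^∞ (1 - d)/y² dy
= -log d`; for `d ≥ 1` the integrand vanishes. The intersection lies above height `d`, so its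
truncations at height `ε < d` are the set itself. -/

open Set

theorem hypMeasure_apply {S : Set (ℝ × ℝ)} (hS : MeasurableSet S) :
    hypMeasure S = ∫⁻ y, ENNReal.ofReal (1 / y ^ 2) * volume {a | (a, y) ∈ S} := by
  have hdens : Measurable fun p : ℝ × ℝ => ENNReal.ofReal (1 / p.2 ^ 2) := by fun_prop
  rw [hypMeasure, withDensity_apply _ hS, ← lintegral_indicator hS, Measure.volume_eq_prod,
    lintegral_prod_symm' _ (hdens.indicator hS)]
  refine lintegral_congr fun y => ?_
  refine (lintegral_congr fun a => ?_).trans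
    (lintegral_indicator_const (measurable_prodMk_right hS) _)
  by_cases h : (a, y) ∈ S <;> simp [h]

theorem measurableSet_coneU : MeasurableSet coneU :=
  (measurableSet_lt measurable_const measurable_fst).inter
    ((measurableSet_lt measurable_fst measurable_const).inter
      (measurableSet_lt (by fun_prop) measurable_snd))

theorem MeasurableSet.htrans {A : Set (ℝ × ℝ)} (hA : MeasurableSet A) (t : ℝ) :
    MeasurableSet (htrans A t) :=
  hA.preimage (by fun_prop : Measurable fun p : ℝ × ℝ => (p.1 - t, p.2))

theorem mk_mem_htrans_coneU_iff {a y t : ℝ} :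
    (a, y) ∈ htrans coneU t ↔ |a - t| < min y 1 / 2 := by
  rw [lt_div_iff₀' two_pos, lt_min_iff]
  constructor
  · rintro ⟨h₁, h₂, h₃⟩
    exact ⟨h₃, by linarith [abs_lt.2 ⟨h₁, h₂⟩]⟩
  · rintro ⟨h₃, h₄⟩
    obtain ⟨h₁, h₂⟩ := abs_lt.1 (show |a - t| < 1 / 2 by linarith)
    exact ⟨h₁, h₂, h₃⟩

theorem setOf_mk_mem_htrans_coneU_inter (x x' y : ℝ) :
    {a | (a, y) ∈ htrans coneU x ∩ htrans coneU x'} =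
      Ioo (max x x' - min y 1 / 2) (min x x' + min y 1 / 2) := by
  ext a
  simp only [mem_ofPred_eq, mem_inter_iff, mk_mem_htrans_coneU_iff, abs_sub_lt_iff, mem_Ioo]
  grind

theorem volume_setOf_mk_mem_htrans_coneU_inter (x x' y : ℝ) :
    volume {a | (a, y) ∈ htrans coneU x ∩ htrans coneU x'} =
      ENNReal.ofReal (min y 1 - |x - x'|) := by
  rw [setOf_mk_mem_htrans_coneU_inter, Real.volume_Ioo, abs_sub_comm, ← max_sub_min_eq_abs]
  ring_nf

theorem abs_sub_lt_snd_of_mem_htrans_coneU_inter {x x' : ℝ} {p : ℝ × ℝ}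
    (hp : p ∈ htrans coneU x ∩ htrans coneU x') : |x - x'| < p.2 := by
  obtain ⟨a, y⟩ := p
  obtain ⟨hx, hx'⟩ := hp
  rw [mk_mem_htrans_coneU_iff] at hx hx'
  have htri : |x - x'| ≤ |a - x| + |a - x'| := abs_sub_comm x a ▸ abs_sub_le x a x'
  linarith [min_le_left y 1]

noncomputable def coneOverlapDensity (d y : ℝ) : ℝ := (min y 1 - d) / y ^ 2

theorem coneOverlapDensity_nonpos {d y : ℝ} (h : min y 1 ≤ d) : coneOverlapDensity d y ≤ 0 :=
  div_nonpos_of_nonpos_of_nonneg (sub_nonpos.2 h) (sq_nonneg y)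

theorem integrableOn_coneOverlapDensity_Icc {d : ℝ} (hd : 0 < d) (b : ℝ) :
    IntegrableOn (coneOverlapDensity d) (Icc d b) :=
  ContinuousOn.integrableOn_Icc <|
    (by fun_prop : Continuous fun y : ℝ => min y 1 - d).continuousOn.div (by fun_prop)
      fun y hy => pow_ne_zero 2 (hd.trans_le hy.1).ne'

theorem integral_coneOverlapDensity_of_le_one {d : ℝ} (hd : 0 < d) (hd1 : d ≤ 1) :
    ∫ y in d..1, coneOverlapDensity d y = d - 1 - log d := by
  have hderiv : ∀ y ∈ uIcc d 1,
      HasDerivAt (fun y => log y + d * y⁻¹) (coneOverlapDensity d y) y := by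
    intro y hy
    rw [uIcc_of_le hd1] at hy
    have hy0 : y ≠ 0 := (hd.trans_le hy.1).ne'
    refine ((hasDerivAt_log hy0).add ((hasDerivAt_inv hy0).const_mul d)).congr_deriv ?_
    rw [coneOverlapDensity, min_eq_left hy.2]
    field_simp
    ring
  rw [intervalIntegral.integral_eq_sub_of_hasDerivAt hderiv
    ((intervalIntegrable_iff_integrableOn_Icc_of_le hd1).2
      (integrableOn_coneOverlapDensity_Icc hd 1)), log_one, mul_inv_cancel₀ hd.ne']
  ring

theorem coneOverlapDensity_eqOn_Ioi_one (d : ℝ) :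
    EqOn (coneOverlapDensity d) (fun y => (1 - d) * y ^ (-2 : ℝ)) (Ioi 1) := by
  intro y hy
  beta_reduce
  rw [coneOverlapDensity, min_eq_right (le_of_lt hy), rpow_neg (zero_le_one.trans hy.le),
    rpow_two, div_eq_mul_inv]

theorem integrableOn_coneOverlapDensity_Ioi_one (d : ℝ) :
    IntegrableOn (coneOverlapDensity d) (Ioi 1) :=
  IntegrableOn.congr_fun
    ((integrableOn_Ioi_rpow_of_lt (by norm_num : (-2 : ℝ) < -1) one_pos).const_mul (1 - d))
    (coneOverlapDensity_eqOn_Ioi_one d).symm measurableSet_Ioi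

theorem integral_coneOverlapDensity_Ioi_one (d : ℝ) :
    ∫ y in Ioi 1, coneOverlapDensity d y = 1 - d := by
  rw [setIntegral_congr_fun measurableSet_Ioi (coneOverlapDensity_eqOn_Ioi_one d),
    integral_const_mul, integral_Ioi_rpow_of_lt (by norm_num) one_pos]
  norm_num

theorem integrableOn_coneOverlapDensity_Ioi {d : ℝ} (hd : 0 < d) (hd1 : d ≤ 1) :
    IntegrableOn (coneOverlapDensity d) (Ioi d) := by
  rw [← Ioc_union_Ioi_eq_Ioi hd1]
  exact ((integrableOn_coneOverlapDensity_Icc hd 1).mono_set Ioc_subset_Icc_self).union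
    (integrableOn_coneOverlapDensity_Ioi_one d)

theorem integral_coneOverlapDensity_Ioi {d : ℝ} (hd : 0 < d) (hd1 : d ≤ 1) :
    ∫ y in Ioi d, coneOverlapDensity d y = -log d := by
  rw [← Ioc_union_Ioi_eq_Ioi hd1, setIntegral_union (Ioc_disjoint_Ioi le_rfl) measurableSet_Ioi
    ((integrableOn_coneOverlapDensity_Icc hd 1).mono_set Ioc_subset_Icc_self)
    (integrableOn_coneOverlapDensity_Ioi_one d), ← intervalIntegral.integral_of_le hd1,
    integral_coneOverlapDensity_of_le_one hd hd1, integral_coneOverlapDensity_Ioi_one]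
  ring

theorem lintegral_coneOverlapDensity {d : ℝ} (hd : 0 < d) :
    ∫⁻ y, ENNReal.ofReal (coneOverlapDensity d y) = ENNReal.ofReal (log (1 / min d 1)) := by
  rcases le_total d 1 with hd1 | hd1
  · have hsupp :
        Function.support (fun y => ENNReal.ofReal (coneOverlapDensity d y)) ⊆ Ioi d := by
      intro y hy
      by_contra hyd
      exact hy (ENNReal.ofReal_eq_zero.2 (coneOverlapDensity_nonpos
        ((min_le_left y 1).trans (not_lt.1 hyd))))
    rw [← setLIntegral_eq_of_support_subset hsupp, ← ofReal_integral_eq_lintegral_ofReal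
      (integrableOn_coneOverlapDensity_Ioi hd hd1), integral_coneOverlapDensity_Ioi hd hd1,
      min_eq_left hd1, one_div, log_inv]
    filter_upwards [ae_restrict_mem measurableSet_Ioi] with y hy
    exact div_nonneg (sub_nonneg.2 (le_min hy.le hd1)) (sq_nonneg y)
  · have hzero : ∀ y, ENNReal.ofReal (coneOverlapDensity d y) = 0 := fun y =>
      ENNReal.ofReal_eq_zero.2 (coneOverlapDensity_nonpos ((min_le_right y 1).trans hd1))
    simp [hzero, min_eq_right hd1]

theorem hypMeasure_htrans_coneU_inter (x x' : ℝ) :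
    hypMeasure (htrans coneU x ∩ htrans coneU x') =
      ∫⁻ y, ENNReal.ofReal (coneOverlapDensity |x - x'| y) := by
  rw [hypMeasure_apply ((measurableSet_coneU.htrans x).inter (measurableSet_coneU.htrans x'))]
  refine lintegral_congr fun y => ?_
  rw [volume_setOf_mk_mem_htrans_coneU_inter, ← ENNReal.ofReal_mul (by positivity),
    coneOverlapDensity, one_div_mul_eq_div]

/-- For `x ≠ x'`, the truncations of `λ((U+x) ∩ (U+x'))` at height `ε` converge as `ε → 0⁺`,
and `λ((U+x) ∩ (U+x')) = log (1 / min (|x-x'|) 1)`. -/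
theorem hyp_area_cone_covariance (x x' : ℝ) (hxx : x ≠ x') :
    Tendsto (fun ε : ℝ =>
        hypMeasure ((htrans coneU x ∩ htrans coneU x') ∩ {p | ε < p.2}))
      (nhdsWithin 0 (Set.Ioi 0))
      (nhds (hypMeasure (htrans coneU x ∩ htrans coneU x'))) ∧
    hypMeasure (htrans coneU x ∩ htrans coneU x')
      = ENNReal.ofReal (Real.log (1 / min |x - x'| 1)) := by
  have hd : 0 < |x - x'| := abs_pos.mpr (sub_ne_zero.mpr hxx)
  refine ⟨tendsto_const_nhds.congr' ?_, ?_⟩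
  · filter_upwards [Ioo_mem_nhdsGT hd] with ε hε
    rw [inter_eq_self_of_subset_left (t := {p : ℝ × ℝ | ε < p.2}) fun p hp =>
      hε.2.trans (abs_sub_lt_snd_of_mem_htrans_coneU_inter hp)]
  · rw [hypMeasure_htrans_coneU_inter, lintegral_coneOverlapDensity hd]
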